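/- Let h be a Schwartz function on ℝ and for τ = x+iy with y > 0, φ ∈ [0,2π), ξ = (ξ₁,ξ₂) ∈ ℝ², define Θ_h(τ,φ;ξ) = y^{1/4} ∑_{n∈ℤ} h_φ((n−ξ₂)·y^{1/2})·e((1/2)(n−ξ₂)²x + nξ₁), where h_φ is the metaplectic rotation of h (in particular h_{π/2} = ĥ, the Fourier transform). Then ∫_{[0,1]²} |Θ_h(τ,φ;ξ)|² dξ = ‖h‖₂², the squared L² norm of h. -/

import Mathlib

/-
For fixed `ξ₂` the theta sum is a Fourier series in `ξ₁` whose `n`-th coefficient has modulus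
`y^{1/4} |h((n - ξ₂)√y)|`; the rapid decay of `h` makes these coefficients absolutely summable,
so Parseval turns the inner integral into the periodization `∑ₙ √y |h((n - ξ₂)√y)|²`.
Integrating a periodization over one period unfolds it to an integral over `ℝ`, here
`∫ √y |h(t√y)|² dt = ‖h‖₂²`. All terms being nonnegative, the unfolding is done with lower
Lebesgue integrals and needs no integrability bookkeeping.
-/

open MeasureTheory

/-- The Jacobi theta sum at `φ = 0` (so that `h_φ = h`):
`Θ_h(x+iy; ξ) = y^{1/4} ∑_{n∈ℤ} h((n-ξ₂)√y) e((1/2)(n-ξ₂)²x + nξ₁)`. -/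
noncomputable def Theta (h : SchwartzMap ℝ ℂ) (x y ξ₁ ξ₂ : ℝ) : ℂ :=
  (y ^ ((1 : ℝ) / 4) : ℝ) *
    ∑' n : ℤ, h (((n : ℝ) - ξ₂) * Real.sqrt y) *
      Complex.exp (2 * Real.pi * Complex.I *
        (((1 : ℝ) / 2) * ((n : ℝ) - ξ₂) ^ 2 * x + (n : ℝ) * ξ₁))

open Set AddCircle

-- An `ℓ¹` sequence is in `ℓ²`, hence the coefficient sequence of an `L²` function, which
-- uniqueness of `L²` limits identifies with the uniformly convergent series.
theorem hasSum_sq_norm_integral_tsum_mul_fourier {T : ℝ} [Fact (0 < T)] {c : ℤ → ℂ}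
    (hc : Summable fun n => ‖c n‖) :
    HasSum (fun n => ‖c n‖ ^ 2)
      (∫ t : AddCircle T, ‖∑' n, c n * fourier n t‖ ^ 2 ∂haarAddCircle) := by
  have hsum : Summable fun n => c n • (fourier n : C(AddCircle T, ℂ)) :=
    Summable.of_norm (by simpa only [norm_smul, fourier_norm, mul_one] using hc)
  set F := ∑' n, c n • (fourier n : C(AddCircle T, ℂ))
  have hc2 : Memℓp c 2 := (memℓp_gen (p := 1) (by simpa using hc)).of_exponent_ge one_le_two
  have hF : fourierBasis.repr.symm ⟨c, hc2⟩ = ContinuousMap.toLp 2 haarAddCircle ℂ F := by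
    refine (fourierBasis.hasSum_repr_symm _).unique ?_
    rw [coe_fourierBasis]
    simpa only [map_smul] using (ContinuousMap.toLp 2 haarAddCircle ℂ).hasSum hsum.hasSum
  have hcoeff : fourierCoeff (ContinuousMap.toLp (E := ℂ) 2 haarAddCircle ℂ F) = c := by
    funext n
    rw [← fourierBasis_repr, ← hF, LinearIsometryEquiv.apply_symm_apply]
  have hparseval := hasSum_sq_fourierCoeff (ContinuousMap.toLp (E := ℂ) 2 haarAddCircle ℂ F)
  rw [hcoeff] at hparseval
  convert hparseval using 1
  refine integral_congr_ae ?_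
  filter_upwards [ContinuousMap.coeFn_toLp (p := 2) (𝕜 := ℂ) haarAddCircle F] with t ht
  rw [ht, ← ContinuousMap.tsum_apply hsum]
  rfl

theorem hasSum_sq_norm_intervalIntegral_tsum_mul_fourier {c : ℤ → ℂ}
    (hc : Summable fun n => ‖c n‖) :
    HasSum (fun n => ‖c n‖ ^ 2)
      (∫ t in (0:ℝ)..1, ‖∑' n, c n * fourier n (t : UnitAddCircle)‖ ^ 2) := by
  convert hasSum_sq_norm_integral_tsum_mul_fourier (T := 1) hc using 1
  have hunfold := AddCircle.intervalIntegral_preimage 1 0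
    fun t : UnitAddCircle => ‖∑' n, c n * fourier n t‖ ^ 2
  rw [zero_add] at hunfold
  rw [hunfold, volume_eq_smul_haarAddCircle]
  simp

theorem lintegral_Ioc_tsum_comp_add_int {f : ℝ → ENNReal} (hf : Measurable f) :
    ∫⁻ x in Ioc (0:ℝ) 1, ∑' n : ℤ, f (x + n) = ∫⁻ x, f x := by
  rw [lintegral_tsum (f := fun (n : ℤ) x => f (x + n))
      fun n => (hf.comp (measurable_add_const _)).aemeasurable,
    ← setLIntegral_univ, ← iUnion_Ioc_intCast ℝ, lintegral_iUnion (fun _ => measurableSet_Ioc)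
      (by simpa using pairwise_disjoint_Ioc_add_intCast (0:ℝ))]
  refine tsum_congr fun n => ?_
  simpa using (measurePreserving_add_right volume (n : ℝ)).setLIntegral_comp_preimage_emb
    (measurableEmbedding_addRight _) f (Ioc n (n + 1))

theorem intervalIntegral_tsum_comp_int_sub_eq_integral {f : ℝ → ℝ} (hf : Measurable f)
    (hf0 : 0 ≤ f) (hs : ∀ x, Summable fun n : ℤ => f (n - x)) :
    ∫ x in (0:ℝ)..1, ∑' n : ℤ, f (n - x) = ∫ x, f x := by
  have hsum_meas : Measurable fun x => ∑' n : ℤ, f (n - x) :=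
    Measurable.tsum fun n => hf.comp (measurable_const.sub measurable_id)
  rw [intervalIntegral.integral_of_le zero_le_one,
    integral_eq_lintegral_of_nonneg_ae (ae_of_all _ fun x => tsum_nonneg fun n => hf0 _)
      hsum_meas.aestronglyMeasurable,
    integral_eq_lintegral_of_nonneg_ae (ae_of_all _ hf0) hf.aestronglyMeasurable]
  have hreflect : ∀ x, ENNReal.ofReal (∑' n : ℤ, f (n - x))
      = ∑' n : ℤ, ENNReal.ofReal (f (-(x + n))) := fun x => by
    rw [ENNReal.ofReal_tsum_of_nonneg (fun n => hf0 _) (hs x),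
      ← (Equiv.neg ℤ).tsum_eq fun n : ℤ => ENNReal.ofReal (f (-(x + n)))]
    simp [sub_eq_add_neg]
  simp_rw [hreflect]
  rw [lintegral_Ioc_tsum_comp_add_int (f := fun t => ENNReal.ofReal (f (-t))) (by fun_prop),
    lintegral_neg_eq_self fun t => ENNReal.ofReal (f t)]

theorem SchwartzMap.summable_norm_int {E : Type*} [NormedAddCommGroup E] [NormedSpace ℝ E]
    (f : SchwartzMap ℝ E) : Summable fun n : ℤ => ‖f n‖ :=
  summable_of_isBigO (Real.summable_abs_int_rpow one_lt_two)
    ((f.isBigO_cocompact_rpow (-2)).norm_left.comp_tendsto Int.tendsto_coe_cofinite)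

noncomputable def thetaCoeff (h : SchwartzMap ℝ ℂ) (x y ξ₂ : ℝ) (n : ℤ) : ℂ :=
  (y ^ ((1 : ℝ) / 4) : ℝ) * h (((n : ℝ) - ξ₂) * Real.sqrt y) *
    Complex.exp ((Real.pi * ((n : ℝ) - ξ₂) ^ 2 * x : ℝ) * Complex.I)

theorem Theta_eq_tsum_thetaCoeff_mul_fourier (h : SchwartzMap ℝ ℂ) (x y ξ₁ ξ₂ : ℝ) :
    Theta h x y ξ₁ ξ₂ = ∑' n : ℤ, thetaCoeff h x y ξ₂ n * fourier n (ξ₁ : UnitAddCircle) := by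
  rw [Theta, ← tsum_mul_left]
  refine tsum_congr fun n => ?_
  simp only [thetaCoeff, fourier_coe_apply, mul_assoc, ← Complex.exp_add]
  congr 3
  push_cast
  ring

theorem norm_thetaCoeff (h : SchwartzMap ℝ ℂ) (x : ℝ) {y : ℝ} (hy : 0 ≤ y) (ξ₂ : ℝ) (n : ℤ) :
    ‖thetaCoeff h x y ξ₂ n‖ = y ^ ((1 : ℝ) / 4) * ‖h (((n : ℝ) - ξ₂) * Real.sqrt y)‖ := by
  rw [thetaCoeff, norm_mul, norm_mul, Complex.norm_exp_ofReal_mul_I, Complex.norm_real,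
    Real.norm_of_nonneg (by positivity), mul_one]

theorem sq_norm_thetaCoeff (h : SchwartzMap ℝ ℂ) (x : ℝ) {y : ℝ} (hy : 0 ≤ y) (ξ₂ : ℝ) (n : ℤ) :
    ‖thetaCoeff h x y ξ₂ n‖ ^ 2 = Real.sqrt y * ‖h (((n : ℝ) - ξ₂) * Real.sqrt y)‖ ^ 2 := by
  rw [norm_thetaCoeff h x hy, mul_pow, ← Real.rpow_natCast, ← Real.rpow_mul hy,
    Real.sqrt_eq_rpow]
  norm_num

theorem summable_norm_thetaCoeff (h : SchwartzMap ℝ ℂ) (x : ℝ) {y : ℝ} (hy : 0 < y) (ξ₂ : ℝ) :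
    Summable fun n => ‖thetaCoeff h x y ξ₂ n‖ := by
  let g : SchwartzMap ℝ ℂ := SchwartzMap.compSubConstCLM ℂ ξ₂
    (SchwartzMap.compCLMOfContinuousLinearEquiv ℂ
      (ContinuousLinearEquiv.unitsEquivAut ℝ (Units.mk0 (Real.sqrt y) (by positivity))) h)
  refine (g.summable_norm_int.mul_left (y ^ ((1 : ℝ) / 4))).congr fun n => ?_
  rw [norm_thetaCoeff h x hy.le]
  rfl

/-- The integral over the torus of the absolute square of the theta sum is the
squared `L²` norm of `h`. -/
theorem theta_L2_norm (h : SchwartzMap ℝ ℂ) (x y : ℝ) (hy : 0 < y) :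
    ∫ ξ₂ in (0:ℝ)..1, (∫ ξ₁ in (0:ℝ)..1, ‖Theta h x y ξ₁ ξ₂‖ ^ 2)
      = ∫ w : ℝ, ‖h w‖ ^ 2 := by
  set Φ : ℝ → ℝ := fun t => Real.sqrt y * ‖h (t * Real.sqrt y)‖ ^ 2
  have hinner : ∀ ξ₂, HasSum (fun n : ℤ => Φ (n - ξ₂))
      (∫ ξ₁ in (0:ℝ)..1, ‖Theta h x y ξ₁ ξ₂‖ ^ 2) := fun ξ₂ => by
    simpa only [Theta_eq_tsum_thetaCoeff_mul_fourier, sq_norm_thetaCoeff h x hy.le] using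
      hasSum_sq_norm_intervalIntegral_tsum_mul_fourier (summable_norm_thetaCoeff h x hy ξ₂)
  have hsqrt : 0 < Real.sqrt y := Real.sqrt_pos.2 hy
  calc _ = ∫ ξ₂ in (0:ℝ)..1, ∑' n : ℤ, Φ (n - ξ₂) := by simp_rw [(hinner _).tsum_eq]
    _ = ∫ t, Φ t := intervalIntegral_tsum_comp_int_sub_eq_integral (by fun_prop)
          (fun t => by positivity) fun ξ₂ => (hinner ξ₂).summable
    _ = ∫ w, ‖h w‖ ^ 2 := by
      rw [integral_const_mul, Measure.integral_comp_mul_right (fun w => ‖h w‖ ^ 2), abs_inv,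
        abs_of_pos hsqrt, smul_eq_mul, mul_inv_cancel_left₀ hsqrt.ne']
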